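/- arXiv:2510.06033 — 2 statements merged into one kernel-verified Lean document; each statement's English description precedes it below -/
import Mathlib

section
/- Suppose (g, ĥ_1, …, ĥ_K) satisfies the atomic optimality equations. Then the function h := ĥ_1 satisfies the joint optimality equation with the same constant g; that is, for every s ∈ S, ĥ_1(s) = max over feasible atomic sequences â at s of [ rew(s, â) − g + Σ_{s' ∈ S} P_sys(post(s, â), s') · ĥ_1(s') ] (Lemma 2, first part: the solution of the atomic optimality equations also solves the optimality equation of the original MDP). -/
open Filter Finset Matrix

/-- The state reached after `n` atomic steps following the action sequence `a` from `s`. -/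
def rollSeq {S A : Type*} (T : S → A → S) (s : S) (a : ℕ → A) : ℕ → S
  | 0 => s
  | n + 1 => T (rollSeq T s a n) (a n)

/-- The first `K` entries of the action sequence `a` form a feasible atomic sequence at `s`. -/
def FeasibleSeq {S A : Type*} (T : S → A → S) (As : S → Finset A) (K : ℕ) (s : S)
    (a : ℕ → A) : Prop :=
  ∀ k, k < K → a k ∈ As (rollSeq T s a k)

/-- Post-decision state of an atomic sequence. -/
def postState {S A : Type*} (T : S → A → S) (K : ℕ) (s : S) (a : ℕ → A) : S :=
  rollSeq T s a K

/-- Reward of an atomic sequence. -/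
def seqReward {S A : Type*} (T : S → A → S) (rhat : A → ℝ) (rH : S → ℝ) (K : ℕ) (s : S)
    (a : ℕ → A) : ℝ :=
  (∑ k ∈ Finset.range K, rhat (a k)) + rH (rollSeq T s a K)

/-- A row-stochastic matrix. -/
def RowStochastic {S : Type*} [Fintype S] (P : Matrix S S ℝ) : Prop :=
  (∀ s s', 0 ≤ P s s') ∧ ∀ s, ∑ s', P s s' = 1

/-- Transition matrix of a deterministic joint policy. -/
def jointP {S A : Type*} (T : S → A → S) (Psys : Matrix S S ℝ) (K : ℕ) (σ : S → ℕ → A) :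
    Matrix S S ℝ :=
  Matrix.of fun s s' => Psys (postState T K s (σ s)) s'

/-- Per-period reward vector of a deterministic joint policy. -/
def jointR {S A : Type*} (T : S → A → S) (rhat : A → ℝ) (rH : S → ℝ) (K : ℕ)
    (σ : S → ℕ → A) (s : S) : ℝ :=
  seqReward T rhat rH K s (σ s)

/-- Rollout states of a step-dependent atomic policy. -/
def rollDep {S A : Type*} (T : S → A → S) (μ : ℕ → S → A) (s : S) : ℕ → S
  | 0 => s
  | n + 1 => T (rollDep T μ s n) (μ n (rollDep T μ s n))

/-- Transition matrix of a deterministic step-dependent atomic policy. -/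
def depP {S A : Type*} (T : S → A → S) (Psys : Matrix S S ℝ) (K : ℕ) (μ : ℕ → S → A) :
    Matrix S S ℝ :=
  Matrix.of fun s s' => Psys (rollDep T μ s K) s'

/-- Per-period reward vector of a deterministic step-dependent atomic policy. -/
def depR {S A : Type*} (T : S → A → S) (rhat : A → ℝ) (rH : S → ℝ) (K : ℕ)
    (μ : ℕ → S → A) (s : S) : ℝ :=
  (∑ k ∈ Finset.range K, rhat (μ k (rollDep T μ s k))) + rH (rollDep T μ s K)

/-- Transition matrix of a deterministic step-independent atomic policy. -/
def indP {S A : Type*} (T : S → A → S) (Psys : Matrix S S ℝ) (K : ℕ) (pol : S → A) :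
    Matrix S S ℝ :=
  depP T Psys K fun _ => pol

/-- Per-period reward vector of a deterministic step-independent atomic policy. -/
def indR {S A : Type*} (T : S → A → S) (rhat : A → ℝ) (rH : S → ℝ) (K : ℕ)
    (pol : S → A) (s : S) : ℝ :=
  depR T rhat rH K (fun _ => pol) s

/-- `n`-horizon average reward from state `s` under transition matrix `P` and reward `r`. -/
noncomputable def avgRew {S : Type*} [Fintype S] [DecidableEq S] (P : Matrix S S ℝ)
    (r : S → ℝ) (s : S) (n : ℕ) : ℝ :=
  (n : ℝ)⁻¹ * ∑ t ∈ Finset.range n, ((P ^ t) *ᵥ r) s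

/-- The joint optimality equation for `(g, h)`. -/
def JointOptEq {S A : Type*} [Fintype S] (T : S → A → S) (As : S → Finset A) (rhat : A → ℝ)
    (rH : S → ℝ) (Psys : Matrix S S ℝ) (K : ℕ) (g : ℝ) (h : S → ℝ) : Prop :=
  ∀ s, IsGreatest {x : ℝ | ∃ a : ℕ → A, FeasibleSeq T As K s a ∧
    x = seqReward T rhat rH K s a - g + ∑ s', Psys (postState T K s a) s' * h s'} (h s)

/-- The atomic optimality equations, with atomic steps indexed `0, …, K-1`. -/
def AtomicOptEq {S A : Type*} [Fintype S] (T : S → A → S) (As : S → Finset A) (rhat : A → ℝ)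
    (rH : S → ℝ) (Psys : Matrix S S ℝ) (K : ℕ) (g : ℝ) (hhat : ℕ → S → ℝ) : Prop :=
  (∀ k, k + 1 < K → ∀ s, IsGreatest
      {x : ℝ | ∃ a ∈ As s, x = rhat a - g / (K : ℝ) + hhat (k + 1) (T s a)} (hhat k s)) ∧
  ∀ s, IsGreatest
      {x : ℝ | ∃ a ∈ As s,
        x = rhat a - g / (K : ℝ) + rH (T s a) + ∑ s', Psys (T s a) s' * hhat 0 s'}
      (hhat (K - 1) s)

/-- The passing structure: a distinguished passing action and an idle count. -/
def PassingStruct {S A : Type*} (T : S → A → S) (As : S → Finset A) (rhat : A → ℝ) (K : ℕ)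
    (pass : A) (ι : S → ℕ) : Prop :=
  (∀ s, pass ∈ As s) ∧ (∀ s, T s pass = s) ∧ rhat pass = 0 ∧ (∀ s, ι s ≤ K) ∧
  (∀ s, ∀ a ∈ As s, a ≠ pass → 1 ≤ ι s ∧ ι (T s a) = ι s - 1) ∧
  ∀ s, ι s = 0 → As s = {pass}

/-- The passing-last equation of `h̃` relative to `(g, h)`. -/
def PassLastEq {S A : Type*} [Fintype S] [DecidableEq A] (T : S → A → S) (As : S → Finset A)
    (rhat : A → ℝ) (rH : S → ℝ) (Psys : Matrix S S ℝ) (pass : A) (g : ℝ)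
    (h htil : S → ℝ) : Prop :=
  ∀ s, IsGreatest {x : ℝ | ∃ a ∈ As s,
    x = if a = pass then rH s - g + ∑ s', Psys s s' * h s'
        else rhat a + htil (T s a)} (htil s)

lemma rollSeq_shift {S A : Type*} (T : S → A → S) (s : S) (c : ℕ → A) :
    ∀ n, rollSeq T s c (n + 1) = rollSeq T (T s (c 0)) (fun k => c (k + 1)) n
  | 0 => rfl
  | n + 1 => by
    show T (rollSeq T s c (n + 1)) (c (n + 1)) = _
    rw [rollSeq_shift T s c n]; rfl

lemma key_lemma {S A : Type*} [Fintype S] [Fintype A] (T : S → A → S) (As : S → Finset A)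
    (rhat : A → ℝ) (rH : S → ℝ) (Psys : Matrix S S ℝ)
    (K : ℕ) (g : ℝ) (hhat : ℕ → S → ℝ)
    (hopt : AtomicOptEq T As rhat rH Psys K g hhat) :
    ∀ m, 1 ≤ m → m ≤ K → ∀ s, IsGreatest
      {x : ℝ | ∃ a : ℕ → A, (∀ k, k < m → a k ∈ As (rollSeq T s a k)) ∧
        x = (∑ k ∈ Finset.range m, rhat (a k)) - (m : ℝ) * (g / K) + rH (rollSeq T s a m)
          + ∑ s', Psys (rollSeq T s a m) s' * hhat 0 s'} (hhat (K - m) s) := by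
  intro m
  induction m with
  | zero => omega
  | succ m ih =>
    intro _ hmK s
    rcases Nat.eq_zero_or_pos m with hm | hm
    · subst hm
      simp only [Nat.zero_add]
      obtain ⟨hmem, hub⟩ := hopt.2 s
      constructor
      · obtain ⟨a, ha, heq⟩ := hmem
        refine ⟨fun _ => a, fun k hk => ?_, ?_⟩
        · interval_cases k; exact ha
        · have hroll : rollSeq T s (fun _ => a) 1 = T s a := rfl
          rw [hroll, Finset.sum_range_one, heq]
          push_cast; ring
      · rintro x ⟨a, hfeas, hx⟩
        refine hub ⟨a 0, hfeas 0 one_pos, ?_⟩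
        have hroll : rollSeq T s a 1 = T s (a 0) := rfl
        rw [hx, hroll, Finset.sum_range_one]
        push_cast; ring
    · have h1 : K - (m + 1) + 1 < K := by omega
      have h2 : K - (m + 1) + 1 = K - m := by omega
      obtain ⟨hmem, hub⟩ := hopt.1 (K - (m + 1)) h1 s
      rw [h2] at hmem hub
      constructor
      · obtain ⟨a, ha, heq⟩ := hmem
        obtain ⟨⟨b, hbfeas, hbeq⟩, _⟩ := ih hm (by omega) (T s a)
        set c : ℕ → A := fun k => if k = 0 then a else b (k - 1) with hc
        have hc0 : c 0 = a := rfl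
        have hcs : ∀ k, c (k + 1) = b k := fun k => rfl
        have hrc : ∀ j, rollSeq T s c (j + 1) = rollSeq T (T s a) b j := fun j =>
          rollSeq_shift T s c j
        refine ⟨c, fun k hk => ?_, ?_⟩
        · match k with
          | 0 => exact ha
          | j + 1 =>
            rw [hrc j, hcs j]
            exact hbfeas j (by omega)
        · have hsum : ∑ k ∈ Finset.range (m + 1), rhat (c k)
              = rhat a + ∑ k ∈ Finset.range m, rhat (b k) := by
            rw [Finset.sum_range_succ']
            exact add_comm _ _
          rw [hrc m, hsum, heq, hbeq]
          push_cast; ring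
      · rintro x ⟨c, hcfeas, hx⟩
        have hrc : ∀ j, rollSeq T s c (j + 1) = rollSeq T (T s (c 0)) (fun k => c (k + 1)) j :=
          rollSeq_shift T s c
        have htail : (∑ k ∈ Finset.range m, rhat (c (k + 1)))
            - (m : ℝ) * (g / K) + rH (rollSeq T (T s (c 0)) (fun k => c (k + 1)) m)
            + ∑ s', Psys (rollSeq T (T s (c 0)) (fun k => c (k + 1)) m) s' * hhat 0 s'
            ≤ hhat (K - m) (T s (c 0)) := by
          apply (ih hm (by omega) (T s (c 0))).2
          refine ⟨fun k => c (k + 1), fun k hk => ?_, rfl⟩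
          rw [← hrc k]
          exact hcfeas (k + 1) (by omega)
        calc x = rhat (c 0) - g / K + ((∑ k ∈ Finset.range m, rhat (c (k + 1)))
              - (m : ℝ) * (g / K) + rH (rollSeq T (T s (c 0)) (fun k => c (k + 1)) m)
              + ∑ s', Psys (rollSeq T (T s (c 0)) (fun k => c (k + 1)) m) s' * hhat 0 s') := by
              rw [hx, Finset.sum_range_succ', hrc m]; push_cast; ring
          _ ≤ rhat (c 0) - g / K + hhat (K - m) (T s (c 0)) := by linarith
          _ ≤ hhat (K - (m + 1)) s := hub ⟨c 0, hcfeas 0 (by omega), rfl⟩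

/-- **Lemma 2, first part**: a solution `(g, ĥ_0, …, ĥ_{K-1})` of the atomic optimality
equations yields a solution `(g, ĥ_0)` of the joint optimality equation of the original MDP. -/
theorem stmt3 {S A : Type*} [Fintype S] [DecidableEq S] [Nonempty S] [Fintype A]
    (T : S → A → S) (As : S → Finset A) (hAs : ∀ s, (As s).Nonempty)
    (rhat : A → ℝ) (rH : S → ℝ) (Psys : Matrix S S ℝ) (hPsys : RowStochastic Psys)
    (K : ℕ) (hK : 1 ≤ K) (g : ℝ) (hhat : ℕ → S → ℝ)
    (hopt : AtomicOptEq T As rhat rH Psys K g hhat) :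
    JointOptEq T As rhat rH Psys K g (hhat 0) := by
  intro s
  have hKne : (K : ℝ) ≠ 0 := by positivity
  have := key_lemma T As rhat rH Psys K g hhat hopt K hK le_rfl s
  rw [Nat.sub_self] at this
  have hset : {x : ℝ | ∃ a : ℕ → A, FeasibleSeq T As K s a ∧
      x = seqReward T rhat rH K s a - g + ∑ s', Psys (postState T K s a) s' * hhat 0 s'}
      = {x : ℝ | ∃ a : ℕ → A, (∀ k, k < K → a k ∈ As (rollSeq T s a k)) ∧
        x = (∑ k ∈ Finset.range K, rhat (a k)) - (K : ℝ) * (g / K) + rH (rollSeq T s a K)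
          + ∑ s', Psys (rollSeq T s a K) s' * hhat 0 s'} := by
    ext x
    constructor
    · rintro ⟨a, hfeas, hx⟩
      refine ⟨a, hfeas, ?_⟩
      rw [hx]
      unfold seqReward postState
      field_simp
      ring
    · rintro ⟨a, hfeas, hx⟩
      refine ⟨a, hfeas, ?_⟩
      rw [hx]
      unfold seqReward postState
      field_simp
      ring
  rw [hset]
  exact this
end

section
/- Let S be a nonempty finite type, let P be a row-stochastic real matrix indexed by S × S, let r : S → ℝ, g ∈ ℝ, and h : S → ℝ satisfy h(s) ≥ r(s) − g + (P h)(s) for every s ∈ S. Then for every s ∈ S, limsup_{T→∞} (1/T) Σ_{t=0}^{T−1} (P^t r)(s) ≤ g (a super-solution of the optimality equation bounds the long-run average reward of every policy from above). -/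
open Filter Finset Matrix

section Stochastic

variable {R n : Type*} [Fintype n] [DecidableEq n] [CommRing R] [PartialOrder R]
  [IsOrderedRing R] {M : Matrix n n R}

lemma mulVec_le_mulVec_of_mem_rowStochastic (hM : M ∈ rowStochastic R n) {u v : n → R}
    (huv : u ≤ v) : M *ᵥ u ≤ M *ᵥ v := fun i => by
  have := nonneg_mulVec_of_mem_rowStochastic hM (x := v - u) (fun j => sub_nonneg.2 (huv j)) i
  rwa [mulVec_sub, Pi.sub_apply, sub_nonneg] at this

lemma mulVec_const_of_mem_rowStochastic (hM : M ∈ rowStochastic R n) (c : R) :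
    M *ᵥ (fun _ => c) = fun _ => c := by
  have hc : (fun _ : n => c) = c • (1 : n → R) := by ext; simp
  rw [hc, mulVec_smul, one_vecMul_of_mem_rowStochastic hM]

lemma le_mulVec_of_mem_rowStochastic (hM : M ∈ rowStochastic R n) {c : R} {v : n → R}
    (hv : ∀ i, c ≤ v i) (i : n) : c ≤ (M *ᵥ v) i := by
  simpa [mulVec_const_of_mem_rowStochastic hM] using
    mulVec_le_mulVec_of_mem_rowStochastic hM hv i

lemma sum_pow_mulVec_add_pow_mulVec_le (hM : M ∈ rowStochastic R n) {r h : n → R} {g : R}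
    (hsuper : r + M *ᵥ h ≤ (fun _ => g) + h) (T : ℕ) :
    ∑ t ∈ range T, M ^ t *ᵥ r + M ^ T *ᵥ h ≤ (fun _ => (T : R) * g) + h := by
  induction T with
  | zero => simp [Pi.le_def]
  | succ T ih =>
    have step : M ^ T *ᵥ r + M ^ (T + 1) *ᵥ h ≤ (fun _ => g) + M ^ T *ᵥ h := by
      have := mulVec_le_mulVec_of_mem_rowStochastic (pow_mem hM T) hsuper
      rwa [mulVec_add, mulVec_add, mulVec_const_of_mem_rowStochastic (pow_mem hM T),
        mulVec_mulVec, ← pow_succ] at this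
    calc ∑ t ∈ range (T + 1), M ^ t *ᵥ r + M ^ (T + 1) *ᵥ h
        = ∑ t ∈ range T, M ^ t *ᵥ r + (M ^ T *ᵥ r + M ^ (T + 1) *ᵥ h) := by
          rw [sum_range_succ, add_assoc]
      _ ≤ ∑ t ∈ range T, M ^ t *ᵥ r + ((fun _ => g) + M ^ T *ᵥ h) := add_le_add_right step _
      _ = (∑ t ∈ range T, M ^ t *ᵥ r + M ^ T *ᵥ h) + fun _ => g := by abel
      _ ≤ ((fun _ => (T : R) * g) + h) + fun _ => g := add_le_add_left ih _
      _ = (fun _ => ((T + 1 : ℕ) : R) * g) + h := by ext; simp; ring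

end Stochastic

lemma sum_pow_mulVec_apply_le {S : Type*} [Fintype S] [DecidableEq S] {P : Matrix S S ℝ}
    (hP : P ∈ rowStochastic ℝ S) {r h : S → ℝ} {g c : ℝ}
    (hsuper : ∀ s, r s - g + (P *ᵥ h) s ≤ h s) (hc : ∀ s, c ≤ h s) (T : ℕ) (s : S) :
    ∑ t ∈ range T, (P ^ t *ᵥ r) s ≤ T * g + (h s - c) := by
  have htele := sum_pow_mulVec_add_pow_mulVec_le (r := r) (h := h) (g := g) hP
    (fun s => by simp only [Pi.add_apply]; linarith [hsuper s]) T s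
  simp only [Pi.add_apply, Finset.sum_apply] at htele
  linarith [le_mulVec_of_mem_rowStochastic (pow_mem hP T) hc s]

lemma limsup_inv_mul_sum_le {a : ℕ → ℝ} {d g K : ℝ} (hlow : ∀ t, d ≤ a t)
    (hup : ∀ T, ∑ t ∈ range T, a t ≤ T * g + K) :
    limsup (fun T : ℕ => (T : ℝ)⁻¹ * ∑ t ∈ range T, a t) atTop ≤ g := by
  have hbound : Tendsto (fun T : ℕ => g + (T : ℝ)⁻¹ * K) atTop (nhds g) := by
    simpa using tendsto_const_nhds.add
      ((tendsto_inv_atTop_zero.comp tendsto_natCast_atTop_atTop).mul_const K)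
  -- `limsup` on `ℝ` is a junk value for sequences unbounded below, hence `hlow`.
  have hcobdd : IsCoboundedUnder (· ≤ ·) atTop fun T : ℕ => (T : ℝ)⁻¹ * ∑ t ∈ range T, a t := by
    refine (isBoundedUnder_of_eventually_ge (a := d) ?_).isCoboundedUnder_le
    filter_upwards [eventually_gt_atTop 0] with T hT
    have hsum := card_nsmul_le_sum (range T) a d fun t _ => hlow t
    rw [card_range, nsmul_eq_mul] at hsum
    rwa [le_inv_mul_iff₀ (by positivity)]
  refine (limsup_le_limsup ?_ hcobdd hbound.isBoundedUnder_le).trans_eq hbound.limsup_eq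
  filter_upwards [eventually_gt_atTop 0] with T hT
  calc (T : ℝ)⁻¹ * ∑ t ∈ range T, a t ≤ (T : ℝ)⁻¹ * (T * g + K) := by gcongr; exact hup T
    _ = g + (T : ℝ)⁻¹ * K := by field_simp

theorem stmt13_general {S : Type*} [Fintype S] [DecidableEq S]
    (P : Matrix S S ℝ) (hP : RowStochastic P) (r : S → ℝ) (g : ℝ) (h : S → ℝ)
    (hsuper : ∀ s, h s ≥ r s - g + (P *ᵥ h) s) :
    ∀ s : S, Filter.limsup
      (fun T : ℕ => (T : ℝ)⁻¹ * ∑ t ∈ Finset.range T, ((P ^ t) *ᵥ r) s)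
      Filter.atTop ≤ g := by
  intro s
  have hP' : P ∈ rowStochastic ℝ S := mem_rowStochastic_iff_sum.2 hP
  obtain ⟨c, hc⟩ := Finite.exists_ge h
  obtain ⟨d, hd⟩ := Finite.exists_ge r
  exact limsup_inv_mul_sum_le (fun t => le_mulVec_of_mem_rowStochastic (pow_mem hP' t) hd s)
    (fun T => sum_pow_mulVec_apply_le hP' hsuper hc T s)

/-- A super-solution of the evaluation equation bounds the long-run average reward from above:
if `h ≥ r − g + P h` pointwise for a row-stochastic matrix `P`, then the limsup of the Cesàro
averages of the expected rewards is at most `g` from every state. -/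
theorem stmt13 {S : Type*} [Fintype S] [DecidableEq S] [Nonempty S]
    (P : Matrix S S ℝ) (hP : RowStochastic P) (r : S → ℝ) (g : ℝ) (h : S → ℝ)
    (hsuper : ∀ s, h s ≥ r s - g + (P *ᵥ h) s) :
    ∀ s : S, Filter.limsup
      (fun T : ℕ => (T : ℝ)⁻¹ * ∑ t ∈ Finset.range T, ((P ^ t) *ᵥ r) s)
      Filter.atTop ≤ g :=
  stmt13_general P hP r g h hsuper
end
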